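/- Let f : ℝ^{d_x} × ℝ^{d_y} → ℝ be differentiable, convex in x for each fixed y and concave in y for each fixed x, with L-Lipschitz saddle operator F(x,y) = (∇_x f(x,y), −∇_y f(x,y)). Let 0 < e ≤ Γ, 0 < γ ≤ e/(10L), Ω > 0, T ≥ 1, and let X ⊂ ℝ^{d_x}, Y ⊂ ℝ^{d_y} be nonempty compact sets with ‖z‖ ≤ Ω for all z ∈ X × Y. Let V̂_{−1/2}, V̂_{1/2}, …, V̂_{T−1/2} be symmetric positive definite diagonal matrices with e·I ≼ V̂_{t−1/2} ≼ Γ·I and V̂_{t+1/2} ≼ (1 + δ_{t+1})·V̂_{t−1/2} for nonnegative reals δ_1, …, δ_T. Define single-call (optimistic) iterates with z_{−1/2} = z_0: z_{t+1/2} = z_t − γ·V̂_{t−1/2}⁻¹F(z_{t−1/2}) and z_{t+1} = z_t − γ·V̂_{t−1/2}⁻¹F(z_{t+1/2}), and suppose ‖z_t‖ ≤ Ω and ‖z_{t+1/2}‖ ≤ Ω for all t. Let (x̄_T, ȳ_T) = (1/T)·Σ_{t=0}^{T−1} z_{t+1/2}. Then max_{y'∈Y} f(x̄_T, y') − min_{x'∈X}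 f(x', ȳ_T) ≤ 50ΓΩ²/(γT) + (18ΓΩ²/(γT))·Σ_{t=1}^{T} δ_t. -/

import Mathlib

open RealInnerProductSpace


lemma euclid_sum_apply {ι : Type*} {s : Finset ℕ} (g : ℕ → EuclideanSpace ℝ ι) (i : ι) :
    (∑ t ∈ s, g t) i = ∑ t ∈ s, g t i := by
  classical
  induction s using Finset.cons_induction with
  | empty => rfl
  | cons a s ha ih => rw [Finset.sum_cons, Finset.sum_cons, PiLp.add_apply, ih]

lemma psd_diag_nonneg {n : Type*} [Fintype n] [DecidableEq n]
    {M : Matrix n n ℝ} (h : M.PosSemidef) (i : n) : 0 ≤ M i i := by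
  have h2 := h.diag_nonneg (i := i)
  simpa [single_dotProduct, Matrix.mulVec_single] using h2

lemma convexOn_gradient_ineq {E : Type*} [NormedAddCommGroup E] [InnerProductSpace ℝ E]
    [CompleteSpace E] {g : E → ℝ} (hd : Differentiable ℝ g)
    (hc : ConvexOn ℝ Set.univ g) (x u : E) :
    g x - g u ≤ ⟪gradient g x, x - u⟫ := by
  set φ : ℝ → ℝ := fun s => g (u + s • (x - u)) with hφ
  have hline : ∀ s : ℝ, HasDerivAt (fun s : ℝ => u + s • (x - u)) (x - u) s := by
    intro s
    simpa using ((hasDerivAt_id s).smul_const (x - u)).const_add u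
  have hφd : ∀ s : ℝ, HasDerivAt φ (fderiv ℝ g (u + s • (x - u)) (x - u)) s := by
    intro s
    exact (hd _).hasFDerivAt.comp_hasDerivAt s (hline s)
  have hφc : ConvexOn ℝ Set.univ φ := by
    have h2 := hc.comp_affineMap (AffineMap.lineMap u x : ℝ →ᵃ[ℝ] E)
    rw [Set.preimage_univ] at h2
    have hφe : φ = g ∘ ⇑(AffineMap.lineMap u x : ℝ →ᵃ[ℝ] E) := by
      funext s
      simp [hφ, Function.comp, AffineMap.lineMap_apply, add_comm]
    rw [hφe]; exact h2
  have hs := hφc.slope_le_deriv (Set.mem_univ (0:ℝ)) (Set.mem_univ 1) one_pos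
    (hφd 1).differentiableAt
  rw [(hφd 1).deriv] at hs
  have hpt : u + (1:ℝ) • (x - u) = x := by rw [one_smul]; abel
  rw [hpt] at hs
  have hsl : slope φ 0 1 = g x - g u := by
    rw [slope_def_field]
    simp [hφ, hpt]
  rw [hsl] at hs
  have hgr : ⟪gradient g x, x - u⟫ = fderiv ℝ g x (x - u) :=
    InnerProductSpace.toDual_symm_apply
  linarith [hs, hgr.ge, hgr.le]

lemma concaveOn_gradient_ineq {E : Type*} [NormedAddCommGroup E] [InnerProductSpace ℝ E]
    [CompleteSpace E] {g : E → ℝ} (hd : Differentiable ℝ g)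
    (hc : ConcaveOn ℝ Set.univ g) (b y : E) :
    g y - g b ≤ ⟪gradient g b, y - b⟫ := by
  set φ : ℝ → ℝ := fun s => g (b + s • (y - b)) with hφ
  have hline : ∀ s : ℝ, HasDerivAt (fun s : ℝ => b + s • (y - b)) (y - b) s := by
    intro s
    simpa using ((hasDerivAt_id s).smul_const (y - b)).const_add b
  have hφd : ∀ s : ℝ, HasDerivAt φ (fderiv ℝ g (b + s • (y - b)) (y - b)) s := by
    intro s
    exact (hd _).hasFDerivAt.comp_hasDerivAt s (hline s)
  have hφc : ConcaveOn ℝ Set.univ φ := by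
    have h2 := hc.comp_affineMap (AffineMap.lineMap b y : ℝ →ᵃ[ℝ] E)
    rw [Set.preimage_univ] at h2
    have hφe : φ = g ∘ ⇑(AffineMap.lineMap b y : ℝ →ᵃ[ℝ] E) := by
      funext s
      simp [hφ, Function.comp, AffineMap.lineMap_apply, add_comm]
    rw [hφe]; exact h2
  have hs := hφc.slope_le_deriv (Set.mem_univ (0:ℝ)) (Set.mem_univ 1) one_pos
    (hφd 0).differentiableAt
  rw [(hφd 0).deriv] at hs
  have hpt : b + (0:ℝ) • (y - b) = b := by rw [zero_smul]; abel
  rw [hpt] at hs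
  have hpt1 : b + (1:ℝ) • (y - b) = y := by rw [one_smul]; abel
  have hsl : slope φ 0 1 = g y - g b := by
    rw [slope_def_field]
    simp [hφ, hpt1]
  rw [hsl] at hs
  have hgr : ⟪gradient g b, y - b⟫ = fderiv ℝ g b (y - b) :=
    InnerProductSpace.toDual_symm_apply
  linarith [hs, hgr.ge, hgr.le]

lemma euclid_norm_sq {ι : Type*} [Fintype ι] (a : EuclideanSpace ℝ ι) :
    ‖a‖ ^ 2 = ∑ i, (a i) ^ 2 := by
  rw [EuclideanSpace.norm_eq, Real.sq_sqrt (by positivity)]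
  simp [sq_abs]


private lemma q_zero_bound {Q0 R0 e γ L nf nz : ℝ} (he : 0 < e) (hγ0 : 0 < γ) (hL : 0 < L)
    (hγL : γ * L ≤ e / 10) (hQ0 : Q0 ≤ e⁻¹ * nf ^ 2) (hf : nf ≤ L * nz) (hnf : 0 ≤ nf)
    (hnz : 0 ≤ nz) (hz2 : nz ^ 2 ≤ γ ^ 2 * (e⁻¹ * R0)) (hR : 0 ≤ R0) :
    Q0 ≤ (1 / 50) * (0 + R0) := by
  have heinv : (0:ℝ) < e⁻¹ := by positivity
  have hee : e⁻¹ * e = 1 := inv_mul_cancel₀ he.ne'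
  have hf2 : nf ^ 2 ≤ L ^ 2 * nz ^ 2 := by nlinarith
  have h7 : γ ^ 2 * L ^ 2 ≤ e ^ 2 / 100 := by nlinarith [mul_pos hγ0 hL]
  have c1 : Q0 ≤ e⁻¹ * (L ^ 2 * (γ ^ 2 * (e⁻¹ * R0))) := by
    calc Q0 ≤ e⁻¹ * nf ^ 2 := hQ0
    _ ≤ e⁻¹ * (L ^ 2 * nz ^ 2) := mul_le_mul_of_nonneg_left hf2 heinv.le
    _ ≤ e⁻¹ * (L ^ 2 * (γ ^ 2 * (e⁻¹ * R0))) := by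
        apply mul_le_mul_of_nonneg_left _ heinv.le
        exact mul_le_mul_of_nonneg_left hz2 (sq_nonneg L)
  have c2 : e⁻¹ * (L ^ 2 * (γ ^ 2 * (e⁻¹ * R0)))
      = (γ ^ 2 * L ^ 2) * (e⁻¹ * (e⁻¹ * R0)) := by ring
  have hP : 0 ≤ e⁻¹ * (e⁻¹ * R0) := by positivity
  have c3 : (γ ^ 2 * L ^ 2) * (e⁻¹ * (e⁻¹ * R0))
      ≤ (e ^ 2 / 100) * (e⁻¹ * (e⁻¹ * R0)) := mul_le_mul_of_nonneg_right h7 hP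
  have c4 : (e ^ 2 / 100) * (e⁻¹ * (e⁻¹ * R0))
      = (1 / 100) * ((e⁻¹ * e) * ((e⁻¹ * e) * R0)) := by ring
  rw [hee] at c4
  simp only [one_mul] at c4
  linarith

private lemma q_step_bound {Qt Rt1 Qt1 e γ L nf nz na nb : ℝ} (he : 0 < e) (hγ0 : 0 < γ)
    (hL : 0 < L) (hγL : γ * L ≤ e / 10)
    (hna2 : na ^ 2 ≤ e⁻¹ * Qt) (hnb2 : nb ^ 2 ≤ e⁻¹ * Rt1)
    (hQt1 : Qt1 ≤ e⁻¹ * nf ^ 2) (hf : nf ≤ L * nz) (hnf : 0 ≤ nf) (hnz : 0 ≤ nz)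
    (hzab : nz ≤ γ * na + γ * nb) (hQ : 0 ≤ Qt) (hR : 0 ≤ Rt1) :
    Qt1 ≤ (1 / 50) * (Qt + Rt1) := by
  have heinv : (0:ℝ) < e⁻¹ := by positivity
  have hee : e⁻¹ * e = 1 := inv_mul_cancel₀ he.ne'
  have hna : 0 ≤ na ^ 2 := sq_nonneg na
  have hz1 : nz ^ 2 ≤ (γ * na + γ * nb) ^ 2 := by nlinarith
  have hz2 : nz ^ 2 ≤ 2 * γ ^ 2 * (na ^ 2 + nb ^ 2) := by nlinarith [sq_nonneg (γ * na - γ * nb)]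
  have hf2 : nf ^ 2 ≤ L ^ 2 * nz ^ 2 := by nlinarith
  have h7 : γ ^ 2 * L ^ 2 ≤ e ^ 2 / 100 := by nlinarith [mul_pos hγ0 hL]
  have h10 : nz ^ 2 ≤ 2 * γ ^ 2 * (e⁻¹ * Qt + e⁻¹ * Rt1) := by
    calc nz ^ 2 ≤ 2 * γ ^ 2 * (na ^ 2 + nb ^ 2) := hz2
    _ ≤ 2 * γ ^ 2 * (e⁻¹ * Qt + e⁻¹ * Rt1) :=
        mul_le_mul_of_nonneg_left (add_le_add hna2 hnb2) (by positivity)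
  have c1 : Qt1 ≤ e⁻¹ * (L ^ 2 * (2 * γ ^ 2 * (e⁻¹ * Qt + e⁻¹ * Rt1))) := by
    calc Qt1 ≤ e⁻¹ * nf ^ 2 := hQt1
    _ ≤ e⁻¹ * (L ^ 2 * nz ^ 2) := mul_le_mul_of_nonneg_left hf2 heinv.le
    _ ≤ e⁻¹ * (L ^ 2 * (2 * γ ^ 2 * (e⁻¹ * Qt + e⁻¹ * Rt1))) := by
        apply mul_le_mul_of_nonneg_left _ heinv.le
        exact mul_le_mul_of_nonneg_left h10 (sq_nonneg L)
  have c2 : e⁻¹ * (L ^ 2 * (2 * γ ^ 2 * (e⁻¹ * Qt + e⁻¹ * Rt1)))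
      = (γ ^ 2 * L ^ 2) * (2 * (e⁻¹ * (e⁻¹ * (Qt + Rt1)))) := by ring
  have hP : 0 ≤ 2 * (e⁻¹ * (e⁻¹ * (Qt + Rt1))) := by positivity
  have c3 : (γ ^ 2 * L ^ 2) * (2 * (e⁻¹ * (e⁻¹ * (Qt + Rt1))))
      ≤ (e ^ 2 / 100) * (2 * (e⁻¹ * (e⁻¹ * (Qt + Rt1)))) := mul_le_mul_of_nonneg_right h7 hP
  have c4 : (e ^ 2 / 100) * (2 * (e⁻¹ * (e⁻¹ * (Qt + Rt1))))
      = (1 / 50) * ((e⁻¹ * e) * ((e⁻¹ * e) * (Qt + Rt1))) := by ring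
  rw [hee] at c4
  simp only [one_mul] at c4
  linarith

set_option maxHeartbeats 1000000 in
lemma scse_core {ι : Type*} [Fintype ι]
    (S : ℕ)
    (γ e Γ Ω L : ℝ) (hγ0 : 0 < γ) (he : 0 < e) (heΓ : e ≤ Γ) (hL : 0 < L)
    (hγL : γ * L ≤ e / 10) (hΩ : 0 < Ω)
    (d : ℕ → ι → ℝ) (δ : ℕ → ℝ)
    (hdlb : ∀ t < S + 1, ∀ i, e ≤ d t i) (hdub : ∀ t < S + 1, ∀ i, d t i ≤ Γ)
    (hδ0 : ∀ t, 1 ≤ t → t ≤ S + 1 → 0 ≤ δ t)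
    (hgrow : ∀ t, t + 1 < S + 1 → ∀ i, d (t + 1) i ≤ (1 + δ (t + 1)) * d t i)
    (z zh Fv : ℕ → EuclideanSpace ℝ ι)
    (hFlip : ∀ s t, ‖Fv s - Fv t‖ ≤ L * ‖zh s - zh t‖)
    (hzh0 : zh 0 = z 0)
    (hzh : ∀ t < S + 1, ∀ i, zh (t + 1) i = z t i - γ * ((d t i)⁻¹ * Fv t i))
    (hz : ∀ t < S + 1, ∀ i, z (t + 1) i = z t i - γ * ((d t i)⁻¹ * Fv (t + 1) i))
    (u : EuclideanSpace ℝ ι)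
    (hdist : ∀ t ≤ S + 1, ‖z t - u‖ ≤ 2 * Ω) :
    ∑ t ∈ Finset.range (S + 1), ⟪Fv (t + 1), zh (t + 1) - u⟫ ≤
      (2 * Γ * Ω ^ 2) / γ * (1 + ∑ t ∈ Finset.Icc 1 (S + 1), δ t) := by

  have hΓ0 : (0:ℝ) < Γ := lt_of_lt_of_le he heΓ
  have hd0 : ∀ t < S + 1, ∀ i, (0:ℝ) < d t i := fun t ht i => lt_of_lt_of_le he (hdlb t ht i)
  -- quadratic forms
  set SV : ℕ → EuclideanSpace ℝ ι → ℝ := fun t a => ∑ i, d t i * (a i) ^ 2 with hSV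
  set SI : ℕ → EuclideanSpace ℝ ι → ℝ := fun t a => ∑ i, (d t i)⁻¹ * (a i) ^ 2 with hSI
  set Q : ℕ → ℝ := fun t => SI t (Fv (t + 1) - Fv t) with hQ
  set R : ℕ → ℝ := fun t => SI t (Fv t) with hR
  have hSI_nonneg : ∀ t, t < S + 1 → ∀ a : EuclideanSpace ℝ ι, 0 ≤ SI t a := by
    intro t ht a
    apply Finset.sum_nonneg
    intro i _
    have := hd0 t ht i
    positivity
  have hSV_nonneg : ∀ t, t < S + 1 → ∀ a : EuclideanSpace ℝ ι, 0 ≤ SV t a := by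
    intro t ht a
    apply Finset.sum_nonneg
    intro i _
    have := hd0 t ht i
    positivity
  have hSI_le : ∀ t, t < S + 1 → ∀ a : EuclideanSpace ℝ ι, SI t a ≤ e⁻¹ * ‖a‖ ^ 2 := by
    intro t ht a
    rw [euclid_norm_sq, Finset.mul_sum]
    apply Finset.sum_le_sum
    intro i _
    have h1 := hdlb t ht i
    have h2 : (d t i)⁻¹ ≤ e⁻¹ := by
      apply inv_anti₀ he h1
    exact mul_le_mul_of_nonneg_right h2 (sq_nonneg _)
  have hSV_le : ∀ t, t < S + 1 → ∀ a : EuclideanSpace ℝ ι, SV t a ≤ Γ * ‖a‖ ^ 2 := by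
    intro t ht a
    rw [euclid_norm_sq, Finset.mul_sum]
    apply Finset.sum_le_sum
    intro i _
    exact mul_le_mul_of_nonneg_right (hdub t ht i) (sq_nonneg _)
  have hVinv_norm : ∀ t, t < S + 1 → ∀ a : EuclideanSpace ℝ ι,
      ∑ i, ((d t i)⁻¹ * a i) ^ 2 ≤ e⁻¹ * SI t a := by
    intro t ht a
    rw [Finset.mul_sum]
    apply Finset.sum_le_sum
    intro i _
    have h1 := hdlb t ht i
    have h2 : (d t i)⁻¹ ≤ e⁻¹ := inv_anti₀ he h1
    have h3 : (0:ℝ) < d t i := hd0 t ht i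
    have h4 : (0:ℝ) ≤ (d t i)⁻¹ * (a i) ^ 2 := by positivity
    calc ((d t i)⁻¹ * a i) ^ 2 = (d t i)⁻¹ * ((d t i)⁻¹ * (a i) ^ 2) := by ring
    _ ≤ e⁻¹ * ((d t i)⁻¹ * (a i) ^ 2) := mul_le_mul_of_nonneg_right h2 h4
  -- the per-step energy identity
  have key : ∀ t, t < S + 1 →
      2 * γ * ⟪Fv (t + 1), zh (t + 1) - u⟫ =
        SV t (z t - u) - SV t (z (t + 1) - u) + γ ^ 2 * Q t - γ ^ 2 * R t := by
    intro t ht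
    rw [PiLp.inner_apply]
    simp only [RCLike.inner_apply, conj_trivial, hSV, hSI, hQ, hR]
    rw [Finset.mul_sum, Finset.mul_sum, Finset.mul_sum, ← Finset.sum_sub_distrib,
      ← Finset.sum_add_distrib, ← Finset.sum_sub_distrib]
    apply Finset.sum_congr rfl
    intro i _
    have hdne : d t i ≠ 0 := (hd0 t ht i).ne'
    rw [PiLp.sub_apply, PiLp.sub_apply, PiLp.sub_apply, PiLp.sub_apply, hzh t ht i, hz t ht i]
    field_simp
    ring
  -- bound on Q 0
  have hee : e⁻¹ * e = 1 := inv_mul_cancel₀ he.ne'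
  have heinv : (0:ℝ) < e⁻¹ := by positivity
  have hQ0b : Q 0 ≤ (1 / 50) * (0 + R 0) := by
    have h1 : Q 0 ≤ e⁻¹ * ‖Fv 1 - Fv 0‖ ^ 2 := hSI_le 0 (by omega) _
    have h2 : ‖Fv 1 - Fv 0‖ ≤ L * ‖zh 1 - zh 0‖ := hFlip 1 0
    have h3 : ‖zh 1 - zh 0‖ ^ 2 = γ ^ 2 * ∑ i, ((d 0 i)⁻¹ * Fv 0 i) ^ 2 := by
      rw [euclid_norm_sq, Finset.mul_sum]
      apply Finset.sum_congr rfl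
      intro i _
      rw [PiLp.sub_apply, hzh 0 (by omega) i, hzh0]
      ring
    have h4 : ∑ i, ((d 0 i)⁻¹ * Fv 0 i) ^ 2 ≤ e⁻¹ * R 0 := hVinv_norm 0 (by omega) (Fv 0)
    have h5 : 0 ≤ R 0 := hSI_nonneg 0 (by omega) _
    have h8 : ‖zh 1 - zh 0‖ ^ 2 ≤ γ ^ 2 * (e⁻¹ * R 0) := by
      rw [h3]
      exact mul_le_mul_of_nonneg_left h4 (sq_nonneg γ)
    exact q_zero_bound he hγ0 hL hγL h1 h2 (norm_nonneg _) (norm_nonneg _) h8 h5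
  -- bound on Q (t+1)
  have hQtb : ∀ t, t + 1 < S + 1 → Q (t + 1) ≤ (1 / 50) * (Q t + R (t + 1)) := by
    intro t ht
    have ht' : t < S + 1 := by omega
    set a : EuclideanSpace ℝ ι := WithLp.toLp 2 (fun i => (d t i)⁻¹ * (Fv t i - Fv (t + 1) i)) with ha
    set b : EuclideanSpace ℝ ι := WithLp.toLp 2 (fun i => (d (t + 1) i)⁻¹ * Fv (t + 1) i) with hb
    have hvec : zh (t + 2) - zh (t + 1) = γ • a - γ • b := by
      ext i
      have e1 := hzh (t + 1) ht i
      have e2 := hzh t ht' i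
      have e3 := hz t ht' i
      show zh (t + 2) i - zh (t + 1) i = γ * a i - γ * b i
      rw [e1, e2, e3, ha, hb, WithLp.ofLp_toLp, WithLp.ofLp_toLp]
      ring
    have hna : ‖a‖ ^ 2 ≤ e⁻¹ * Q t := by
      rw [euclid_norm_sq]
      have h1 : ∑ i, (a i) ^ 2 = ∑ i, ((d t i)⁻¹ * ((Fv t - Fv (t+1)) i)) ^ 2 := by
        apply Finset.sum_congr rfl
        intro i _
        rw [PiLp.sub_apply, ha]
      rw [h1]
      have h2 := hVinv_norm t ht' (Fv t - Fv (t + 1))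
      have h3 : SI t (Fv t - Fv (t + 1)) = Q t := by
        rw [hQ, hSI]
        apply Finset.sum_congr rfl
        intro i _
        rw [PiLp.sub_apply, PiLp.sub_apply]
        ring
      rw [h3] at h2
      exact h2
    have hnb : ‖b‖ ^ 2 ≤ e⁻¹ * R (t + 1) := by
      rw [euclid_norm_sq]
      have h2 := hVinv_norm (t + 1) ht (Fv (t + 1))
      exact h2
    have hQt1 : Q (t + 1) ≤ e⁻¹ * ‖Fv (t + 2) - Fv (t + 1)‖ ^ 2 := hSI_le (t + 1) ht _
    have h2 : ‖Fv (t + 2) - Fv (t + 1)‖ ≤ L * ‖zh (t + 2) - zh (t + 1)‖ := hFlip (t + 2) (t + 1)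
    have h3 : ‖zh (t + 2) - zh (t + 1)‖ ≤ γ * ‖a‖ + γ * ‖b‖ := by
      rw [hvec]
      calc ‖γ • a - γ • b‖ ≤ ‖γ • a‖ + ‖γ • b‖ := norm_sub_le _ _
      _ = γ * ‖a‖ + γ * ‖b‖ := by
        rw [norm_smul, norm_smul, Real.norm_eq_abs, abs_of_pos hγ0]
    have h8 : 0 ≤ Q t := hSI_nonneg t ht' _
    have h9 : 0 ≤ R (t + 1) := hSI_nonneg (t + 1) ht _
    exact q_step_bound he hγ0 hL hγL hna hnb hQt1 h2 (norm_nonneg _) (norm_nonneg _) h3 h8 h9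
  -- sum comparison of Q and R
  have hQR : ∑ t ∈ Finset.range (S + 1), Q t ≤ ∑ t ∈ Finset.range (S + 1), R t := by
    have e1 : ∑ t ∈ Finset.range (S + 1), Q t
        = (∑ i ∈ Finset.range S, Q (i + 1)) + Q 0 := Finset.sum_range_succ' Q S
    have e2 : ∑ t ∈ Finset.range (S + 1), R t
        = (∑ i ∈ Finset.range S, R (i + 1)) + R 0 := Finset.sum_range_succ' R S
    have e3 : ∑ i ∈ Finset.range S, Q (i + 1)
        ≤ ∑ i ∈ Finset.range S, ((1 / 50) * (Q i + R (i + 1))) := by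
      apply Finset.sum_le_sum
      intro i hi
      have hi' := Finset.mem_range.mp hi
      exact hQtb i (by omega)
    have e4 : ∑ i ∈ Finset.range S, ((1 / 50) * (Q i + R (i + 1)))
        = (1 / 50) * (∑ i ∈ Finset.range S, Q i) + (1 / 50) * (∑ i ∈ Finset.range S, R (i + 1)) := by
      rw [← Finset.mul_sum, Finset.sum_add_distrib, mul_add]
    have e5 : ∑ i ∈ Finset.range S, Q i ≤ ∑ t ∈ Finset.range (S + 1), Q t := by
      apply Finset.sum_le_sum_of_subset_of_nonneg
      · exact Finset.range_subset_range.mpr (by omega)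
      · intro i hi _
        exact hSI_nonneg i (Finset.mem_range.mp hi) _
    have e6 : 0 ≤ ∑ t ∈ Finset.range (S + 1), R t := by
      apply Finset.sum_nonneg
      intro i hi
      exact hSI_nonneg i (Finset.mem_range.mp hi) _
    linarith
  -- telescoping bound
  have hA0 : SV 0 (z 0 - u) ≤ 4 * Γ * Ω ^ 2 := by
    have h1 := hSV_le 0 (by omega) (z 0 - u)
    have h2 := hdist 0 (by omega)
    have hsq : ‖z 0 - u‖ ^ 2 ≤ 4 * Ω ^ 2 := by nlinarith [norm_nonneg (z 0 - u)]
    calc SV 0 (z 0 - u) ≤ Γ * ‖z 0 - u‖ ^ 2 := h1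
    _ ≤ Γ * (4 * Ω ^ 2) := mul_le_mul_of_nonneg_left hsq hΓ0.le
    _ = 4 * Γ * Ω ^ 2 := by ring
  have hAt : ∀ i, i < S → SV (i + 1) (z (i + 1) - u)
      ≤ SV i (z (i + 1) - u) + δ (i + 1) * (4 * Γ * Ω ^ 2) := by
    intro i hi
    have hgi := hgrow i (by omega)
    have hδi : 0 ≤ δ (i + 1) := hδ0 (i + 1) (by omega) (by omega)
    have h2 := hdist (i + 1) (by omega)
    have hsq : ‖z (i + 1) - u‖ ^ 2 ≤ 4 * Ω ^ 2 := by
      nlinarith [norm_nonneg (z (i + 1) - u)]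
    have h1 : SV (i + 1) (z (i + 1) - u)
        ≤ SV i (z (i + 1) - u) + δ (i + 1) * Γ * ‖z (i + 1) - u‖ ^ 2 := by
      rw [hSV, euclid_norm_sq, Finset.mul_sum, ← Finset.sum_add_distrib]
      apply Finset.sum_le_sum
      intro j _
      have h3 := hgi j
      have h4 := hdub i (by omega) j
      have h5 := sq_nonneg ((z (i + 1) - u) j)
      nlinarith [mul_le_mul_of_nonneg_right h3 h5,
        mul_le_mul_of_nonneg_right (mul_le_mul_of_nonneg_left h4 hδi) h5]
    nlinarith [mul_le_mul_of_nonneg_left hsq (mul_nonneg hδi hΓ0.le)]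
  have hBS : 0 ≤ SV S (z (S + 1) - u) := hSV_nonneg S (by omega) _
  have hδsum : ∑ i ∈ Finset.range S, δ (i + 1) ≤ ∑ t ∈ Finset.Icc 1 (S + 1), δ t := by
    have e7 : ∑ i ∈ Finset.range S, δ (i + 1) = ∑ t ∈ Finset.Icc 1 S, δ t := by
      rw [← Finset.Ico_add_one_right_eq_Icc, Finset.sum_Ico_eq_sum_range]
      simp [add_comm]
    rw [e7, Finset.sum_Icc_succ_top (by omega : 1 ≤ S + 1)]
    have := hδ0 (S + 1) (by omega) (by omega)
    linarith
  have hδsum0 : 0 ≤ ∑ t ∈ Finset.Icc 1 (S + 1), δ t := by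
    apply Finset.sum_nonneg
    intro t htm
    obtain ⟨h1, h2⟩ := Finset.mem_Icc.mp htm
    exact hδ0 t h1 h2
  have htel : ∑ t ∈ Finset.range (S + 1), (SV t (z t - u) - SV t (z (t + 1) - u))
      ≤ 4 * Γ * Ω ^ 2 + 4 * Γ * Ω ^ 2 * ∑ t ∈ Finset.Icc 1 (S + 1), δ t := by
    rw [Finset.sum_sub_distrib,
      Finset.sum_range_succ' (fun t => SV t (z t - u)) S,
      Finset.sum_range_succ (fun t => SV t (z (t + 1) - u)) S]
    have h5 : ∑ i ∈ Finset.range S, SV (i + 1) (z (i + 1) - u)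
        ≤ (∑ i ∈ Finset.range S, SV i (z (i + 1) - u))
          + (∑ i ∈ Finset.range S, δ (i + 1)) * (4 * Γ * Ω ^ 2) := by
      rw [Finset.sum_mul, ← Finset.sum_add_distrib]
      apply Finset.sum_le_sum
      intro i hi
      exact hAt i (Finset.mem_range.mp hi)
    have h6 : (∑ i ∈ Finset.range S, δ (i + 1)) * (4 * Γ * Ω ^ 2)
        ≤ (∑ t ∈ Finset.Icc 1 (S + 1), δ t) * (4 * Γ * Ω ^ 2) := by
      apply mul_le_mul_of_nonneg_right hδsum
      positivity
    linarith
  -- combine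
  have hsum : 2 * γ * ∑ t ∈ Finset.range (S + 1), ⟪Fv (t + 1), zh (t + 1) - u⟫
      ≤ 4 * Γ * Ω ^ 2 * (1 + ∑ t ∈ Finset.Icc 1 (S + 1), δ t) := by
    rw [Finset.mul_sum]
    have e8 : ∑ t ∈ Finset.range (S + 1), 2 * γ * ⟪Fv (t + 1), zh (t + 1) - u⟫
        = ∑ t ∈ Finset.range (S + 1),
            (SV t (z t - u) - SV t (z (t + 1) - u) + γ ^ 2 * Q t - γ ^ 2 * R t) := by
      apply Finset.sum_congr rfl
      intro t ht
      exact key t (Finset.mem_range.mp ht)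
    rw [e8]
    have e9 : ∑ t ∈ Finset.range (S + 1),
          (SV t (z t - u) - SV t (z (t + 1) - u) + γ ^ 2 * Q t - γ ^ 2 * R t)
        = (∑ t ∈ Finset.range (S + 1), (SV t (z t - u) - SV t (z (t + 1) - u)))
          + γ ^ 2 * (∑ t ∈ Finset.range (S + 1), Q t)
          - γ ^ 2 * (∑ t ∈ Finset.range (S + 1), R t) := by
      rw [Finset.mul_sum, Finset.mul_sum, ← Finset.sum_add_distrib, ← Finset.sum_sub_distrib]
    rw [e9]
    have h11 := mul_le_mul_of_nonneg_left hQR (sq_nonneg γ)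
    linarith
  rw [div_mul_eq_mul_div, le_div_iff₀ hγ0]
  linarith
/-- The joint vector `(x, y)` in the product Euclidean space. -/
noncomputable def joinxy {dx dy : ℕ} (x : EuclideanSpace ℝ (Fin dx))
    (y : EuclideanSpace ℝ (Fin dy)) : EuclideanSpace ℝ (Fin dx ⊕ Fin dy) :=
  WithLp.toLp 2 (fun i => Sum.elim (fun a => x a) (fun b => y b) i)

/-- The `x`-part of a joint vector. -/
noncomputable def xpart {dx dy : ℕ} (z : EuclideanSpace ℝ (Fin dx ⊕ Fin dy)) :
    EuclideanSpace ℝ (Fin dx) := WithLp.toLp 2 (fun i => z (Sum.inl i))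

/-- The `y`-part of a joint vector. -/
noncomputable def ypart {dx dy : ℕ} (z : EuclideanSpace ℝ (Fin dx ⊕ Fin dy)) :
    EuclideanSpace ℝ (Fin dy) := WithLp.toLp 2 (fun j => z (Sum.inr j))

set_option maxHeartbeats 1000000 in
/-- The convex–concave case of Theorem 2 (inequality (17)) for the single-call
(optimistic) scaled extra gradient method, specialized to exact gradients, zero
momentum and deterministic preconditioner updates. Here `zh t` denotes `z_{t−1/2}`
and `Vh t` denotes `V̂_{t−1/2}`; the duality gap of the averaged half-iterates is
bounded by `50ΓΩ²/(γT) + (18ΓΩ²/(γT))Σ_{t=1}^{T} δ_t`. -/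
theorem single_call_scaled_extragradient_convex_concave_gap
    (dx dy : ℕ)
    (f : EuclideanSpace ℝ (Fin dx) → EuclideanSpace ℝ (Fin dy) → ℝ)
    (hfx : ∀ y, Differentiable ℝ (fun x => f x y))
    (hfy : ∀ x, Differentiable ℝ (f x))
    (hconv : ∀ y, ConvexOn ℝ Set.univ (fun x => f x y))
    (hconc : ∀ x, ConcaveOn ℝ Set.univ (f x))
    (F : EuclideanSpace ℝ (Fin dx ⊕ Fin dy) → EuclideanSpace ℝ (Fin dx ⊕ Fin dy))
    (hFdef : ∀ z, F z = joinxy (gradient (fun x => f x (ypart z)) (xpart z))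
      (-gradient (f (xpart z)) (ypart z)))
    (L e Γ γ Ω : ℝ) (hL : 0 < L)
    (hFlip : ∀ z₁ z₂, ‖F z₁ - F z₂‖ ≤ L * ‖z₁ - z₂‖)
    (he : 0 < e) (heΓ : e ≤ Γ)
    (hγ0 : 0 < γ) (hγ : γ ≤ e / (10 * L)) (hΩ : 0 < Ω)
    (T : ℕ) (hT : 1 ≤ T)
    (X : Set (EuclideanSpace ℝ (Fin dx))) (Y : Set (EuclideanSpace ℝ (Fin dy)))
    (hXne : X.Nonempty) (hXc : IsCompact X)
    (hYne : Y.Nonempty) (hYc : IsCompact Y)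
    (hXYb : ∀ x' ∈ X, ∀ y' ∈ Y, ‖joinxy x' y'‖ ≤ Ω)
    (Vh : ℕ → Matrix (Fin dx ⊕ Fin dy) (Fin dx ⊕ Fin dy) ℝ) (δ : ℕ → ℝ)
    (hVdiag : ∀ t ≤ T, (Vh t).IsDiag)
    (hVpd : ∀ t ≤ T, (Vh t).PosDef)
    (hVe : ∀ t ≤ T, (Vh t - e • (1 : Matrix (Fin dx ⊕ Fin dy) (Fin dx ⊕ Fin dy) ℝ)).PosSemidef)
    (hVΓ : ∀ t ≤ T, (Γ • (1 : Matrix (Fin dx ⊕ Fin dy) (Fin dx ⊕ Fin dy) ℝ) - Vh t).PosSemidef)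
    (hδ : ∀ t, 1 ≤ t → t ≤ T → 0 ≤ δ t)
    (hVgrow : ∀ t < T, ((1 + δ (t + 1)) • Vh t - Vh (t + 1)).PosSemidef)
    (z zh : ℕ → EuclideanSpace ℝ (Fin dx ⊕ Fin dy))
    (hzh0 : zh 0 = z 0)
    (hzh : ∀ t < T, zh (t + 1) = z t - γ • (Matrix.toEuclideanLin (Vh t)⁻¹) (F (zh t)))
    (hz : ∀ t < T, z (t + 1) = z t - γ • (Matrix.toEuclideanLin (Vh t)⁻¹) (F (zh (t + 1))))
    (hzb : ∀ t ≤ T, ‖z t‖ ≤ Ω) (hzhb : ∀ t ≤ T, ‖zh t‖ ≤ Ω)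
    (zavg : EuclideanSpace ℝ (Fin dx ⊕ Fin dy))
    (hzavg : zavg = (T : ℝ)⁻¹ • ∑ t ∈ Finset.range T, zh (t + 1)) :
    sSup ((fun y' => f (xpart zavg) y') '' Y) -
        sInf ((fun x' => f x' (ypart zavg)) '' X) ≤
      50 * Γ * Ω ^ 2 / (γ * T) +
        (18 * Γ * Ω ^ 2 / (γ * T)) * ∑ t ∈ Finset.Icc 1 T, δ t := by
  classical
  obtain ⟨S, rfl⟩ : ∃ S, T = S + 1 := ⟨T - 1, (Nat.succ_pred_eq_of_pos hT).symm⟩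
  -- diagonal entries and their bounds
  set d : ℕ → (Fin dx ⊕ Fin dy) → ℝ := fun t i => Vh t i i with hd
  have hdlb : ∀ t ≤ S + 1, ∀ i, e ≤ d t i := by
    intro t ht i
    have h1 := psd_diag_nonneg (hVe t ht) i
    simp only [Matrix.sub_apply, Matrix.smul_apply, Matrix.one_apply_eq, smul_eq_mul,
      mul_one] at h1
    simp only [hd]
    linarith
  have hdub : ∀ t ≤ S + 1, ∀ i, d t i ≤ Γ := by
    intro t ht i
    have h1 := psd_diag_nonneg (hVΓ t ht) i
    simp only [Matrix.sub_apply, Matrix.smul_apply, Matrix.one_apply_eq, smul_eq_mul,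
      mul_one] at h1
    simp only [hd]
    linarith
  have hd0 : ∀ t ≤ S + 1, ∀ i, (0:ℝ) < d t i := fun t ht i => lt_of_lt_of_le he (hdlb t ht i)
  have hΓ0 : (0:ℝ) < Γ := lt_of_lt_of_le he heΓ
  have hdgrow : ∀ t, t + 1 < S + 1 → ∀ i, d (t + 1) i ≤ (1 + δ (t + 1)) * d t i := by
    intro t ht i
    have h1 := psd_diag_nonneg (hVgrow t (by omega)) i
    simp only [Matrix.sub_apply, Matrix.smul_apply, smul_eq_mul] at h1
    simp only [hd]
    linarith
  -- inverse matrix acts coordinatewise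
  have hMinv : ∀ t, t < S + 1 → ∀ (x : EuclideanSpace ℝ (Fin dx ⊕ Fin dy)) i,
      (Matrix.toEuclideanLin (Vh t)⁻¹ x) i = (d t i)⁻¹ * x i := by
    intro t ht x i
    have hdiag : Vh t = Matrix.diagonal (fun i => d t i) :=
      ((hVdiag t (le_of_lt ht)).diagonal_diag).symm
    have hinv : (Vh t)⁻¹ = Matrix.diagonal (fun i => (d t i)⁻¹) := by
      apply Matrix.inv_eq_right_inv
      rw [hdiag, Matrix.diagonal_mul_diagonal]
      have hfn : (fun i => d t i * (d t i)⁻¹) = fun _ => (1:ℝ) :=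
        funext fun j => mul_inv_cancel₀ (hd0 t (le_of_lt ht) j).ne'
      rw [hfn, Matrix.diagonal_one]
    rw [hinv, Matrix.toEuclideanLin_apply]
    rw [WithLp.ofLp_toLp, Matrix.mulVec_diagonal]
  -- the operator values along half iterates
  set Fv : ℕ → EuclideanSpace ℝ (Fin dx ⊕ Fin dy) := fun t => F (zh t) with hFv
  have hFlip' : ∀ s t, ‖Fv s - Fv t‖ ≤ L * ‖zh s - zh t‖ := fun s t => hFlip _ _
  have hzhco : ∀ t < S + 1, ∀ i, zh (t + 1) i = z t i - γ * ((d t i)⁻¹ * Fv t i) := by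
    intro t ht i
    rw [hzh t ht, PiLp.sub_apply, PiLp.smul_apply, hMinv t ht, smul_eq_mul]
  have hzco : ∀ t < S + 1, ∀ i, z (t + 1) i = z t i - γ * ((d t i)⁻¹ * Fv (t + 1) i) := by
    intro t ht i
    rw [hz t ht, PiLp.sub_apply, PiLp.smul_apply, hMinv t ht, smul_eq_mul]
  have hγL : γ * L ≤ e / 10 := by
    have h12 : γ * (10 * L) ≤ e := by rwa [le_div_iff₀ (by positivity)] at hγ
    linarith
  have hTpos : (0:ℝ) < ((S + 1 : ℕ) : ℝ) := by exact_mod_cast Nat.succ_pos S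
  have hδsum0 : 0 ≤ ∑ t ∈ Finset.Icc 1 (S + 1), δ t := by
    apply Finset.sum_nonneg
    intro t htm
    obtain ⟨ha, hb⟩ := Finset.mem_Icc.mp htm
    exact hδ t ha hb
  -- the key per-pair bound
  have key : ∀ x' ∈ X, ∀ y' ∈ Y,
      f (xpart zavg) y' - f x' (ypart zavg) ≤
        50 * Γ * Ω ^ 2 / (γ * ((S + 1 : ℕ) : ℝ)) +
          (18 * Γ * Ω ^ 2 / (γ * ((S + 1 : ℕ) : ℝ))) * ∑ t ∈ Finset.Icc 1 (S + 1), δ t := by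
    intro x' hx' y' hy'
    set u : EuclideanSpace ℝ (Fin dx ⊕ Fin dy) := joinxy x' y' with hu
    have hub : ‖u‖ ≤ Ω := hXYb x' hx' y' hy'
    have hdistu : ∀ t ≤ S + 1, ‖z t - u‖ ≤ 2 * Ω := by
      intro t ht
      calc ‖z t - u‖ ≤ ‖z t‖ + ‖u‖ := norm_sub_le _ _
      _ ≤ Ω + Ω := add_le_add (hzb t ht) hub
      _ = 2 * Ω := by ring
    have hcore := scse_core S γ e Γ Ω L hγ0 he heΓ hL hγL hΩ d δ
      (fun t ht i => hdlb t (by omega) i) (fun t ht i => hdub t (by omega) i)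
      hδ hdgrow z zh Fv hFlip' hzh0 hzhco hzco u hdistu
    -- per-step convex–concave inequality
    have hstep : ∀ t : ℕ,
        f (xpart (zh (t + 1))) y' - f x' (ypart (zh (t + 1)))
          ≤ ⟪Fv (t + 1), zh (t + 1) - u⟫ := by
      intro t
      set w : EuclideanSpace ℝ (Fin dx ⊕ Fin dy) := zh (t + 1) with hw
      have h1 : f (xpart w) (ypart w) - f x' (ypart w)
          ≤ ⟪gradient (fun x => f x (ypart w)) (xpart w), xpart w - x'⟫ :=
        convexOn_gradient_ineq (hfx (ypart w)) (hconv (ypart w)) (xpart w) x'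
      have h2 : f (xpart w) y' - f (xpart w) (ypart w)
          ≤ ⟪gradient (f (xpart w)) (ypart w), y' - ypart w⟫ :=
        concaveOn_gradient_ineq (hfy (xpart w)) (hconc (xpart w)) (ypart w) y'
      have h3 : ⟪Fv (t + 1), w - u⟫
          = ⟪gradient (fun x => f x (ypart w)) (xpart w), xpart w - x'⟫
            + ⟪gradient (f (xpart w)) (ypart w), y' - ypart w⟫ := by
        have hFw : Fv (t + 1) = joinxy (gradient (fun x => f x (ypart w)) (xpart w))
            (-gradient (f (xpart w)) (ypart w)) := by
          rw [hFv]
          exact hFdef w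
        rw [hFw, PiLp.inner_apply, PiLp.inner_apply, PiLp.inner_apply]
        simp only [RCLike.inner_apply, conj_trivial]
        rw [Fintype.sum_sum_type]
        congr 1
        · apply Finset.sum_congr rfl
          intro i _
          rw [PiLp.sub_apply, PiLp.sub_apply]
          simp only [hu, joinxy, xpart, ypart, Sum.elim_inl, Sum.elim_inr, PiLp.neg_apply]
          try ring
      linarith
    -- Jensen's inequality for the averages
    have hsumw : ∑ t ∈ Finset.range (S + 1), (((S + 1 : ℕ) : ℝ))⁻¹ = 1 := by
      rw [Finset.sum_const, Finset.card_range, nsmul_eq_mul]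
      field_simp
    have havgx : xpart zavg
        = ∑ t ∈ Finset.range (S + 1), (((S + 1 : ℕ) : ℝ))⁻¹ • xpart (zh (t + 1)) := by
      ext i
      have h1 : xpart zavg i
          = (((S + 1 : ℕ) : ℝ))⁻¹ * ∑ t ∈ Finset.range (S + 1), zh (t + 1) (Sum.inl i) := by
        show zavg (Sum.inl i) = _
        rw [hzavg, PiLp.smul_apply, smul_eq_mul, euclid_sum_apply]
      rw [h1, Finset.mul_sum, euclid_sum_apply]
      apply Finset.sum_congr rfl
      intro t _
      rw [PiLp.smul_apply, smul_eq_mul]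
      rfl
    have havgy : ypart zavg
        = ∑ t ∈ Finset.range (S + 1), (((S + 1 : ℕ) : ℝ))⁻¹ • ypart (zh (t + 1)) := by
      ext j
      have h1 : ypart zavg j
          = (((S + 1 : ℕ) : ℝ))⁻¹ * ∑ t ∈ Finset.range (S + 1), zh (t + 1) (Sum.inr j) := by
        show zavg (Sum.inr j) = _
        rw [hzavg, PiLp.smul_apply, smul_eq_mul, euclid_sum_apply]
      rw [h1, Finset.mul_sum, euclid_sum_apply]
      apply Finset.sum_congr rfl
      intro t _
      rw [PiLp.smul_apply, smul_eq_mul]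
      rfl
    have hjx : f (xpart zavg) y'
        ≤ ∑ t ∈ Finset.range (S + 1), (((S + 1 : ℕ) : ℝ))⁻¹ * f (xpart (zh (t + 1))) y' := by
      have hj := (hconv y').map_sum_le (t := Finset.range (S + 1))
        (w := fun _ => (((S + 1 : ℕ) : ℝ))⁻¹) (p := fun t => xpart (zh (t + 1)))
        (fun i _ => by positivity) hsumw (fun i _ => Set.mem_univ _)
      simp only [smul_eq_mul] at hj
      rw [← havgx] at hj
      exact hj
    have hjy : ∑ t ∈ Finset.range (S + 1), (((S + 1 : ℕ) : ℝ))⁻¹ * f x' (ypart (zh (t + 1)))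
        ≤ f x' (ypart zavg) := by
      have hj := (hconc x').le_map_sum (t := Finset.range (S + 1))
        (w := fun _ => (((S + 1 : ℕ) : ℝ))⁻¹) (p := fun t => ypart (zh (t + 1)))
        (fun i _ => by positivity) hsumw (fun i _ => Set.mem_univ _)
      simp only [smul_eq_mul] at hj
      rw [← havgy] at hj
      exact hj
    have hsum2 : (∑ t ∈ Finset.range (S + 1), (((S + 1 : ℕ) : ℝ))⁻¹ * f (xpart (zh (t + 1))) y')
        - (∑ t ∈ Finset.range (S + 1), (((S + 1 : ℕ) : ℝ))⁻¹ * f x' (ypart (zh (t + 1))))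
        ≤ (((S + 1 : ℕ) : ℝ))⁻¹ * ∑ t ∈ Finset.range (S + 1), ⟪Fv (t + 1), zh (t + 1) - u⟫ := by
      rw [Finset.mul_sum, ← Finset.sum_sub_distrib]
      apply Finset.sum_le_sum
      intro t _
      have h4 : (0:ℝ) ≤ (((S + 1 : ℕ) : ℝ))⁻¹ := by positivity
      calc (((S + 1 : ℕ) : ℝ))⁻¹ * f (xpart (zh (t + 1))) y'
            - (((S + 1 : ℕ) : ℝ))⁻¹ * f x' (ypart (zh (t + 1)))
          = (((S + 1 : ℕ) : ℝ))⁻¹ * (f (xpart (zh (t + 1))) y' - f x' (ypart (zh (t + 1)))) := by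
            ring
      _ ≤ (((S + 1 : ℕ) : ℝ))⁻¹ * ⟪Fv (t + 1), zh (t + 1) - u⟫ :=
          mul_le_mul_of_nonneg_left (hstep t) h4
    have h5 : (((S + 1 : ℕ) : ℝ))⁻¹ * ∑ t ∈ Finset.range (S + 1), ⟪Fv (t + 1), zh (t + 1) - u⟫
        ≤ (((S + 1 : ℕ) : ℝ))⁻¹ *
          ((2 * Γ * Ω ^ 2) / γ * (1 + ∑ t ∈ Finset.Icc 1 (S + 1), δ t)) :=
      mul_le_mul_of_nonneg_left hcore (by positivity)
    have h6 : (((S + 1 : ℕ) : ℝ))⁻¹ * ((2 * Γ * Ω ^ 2) / γ * (1 + ∑ t ∈ Finset.Icc 1 (S + 1), δ t))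
        = (2 * Γ * Ω ^ 2) / (γ * ((S + 1 : ℕ) : ℝ)) * (1 + ∑ t ∈ Finset.Icc 1 (S + 1), δ t) := by
      field_simp
    have hA : (0:ℝ) < Γ * Ω ^ 2 / (γ * ((S + 1 : ℕ) : ℝ)) := by positivity
    have h7 : (2 * Γ * Ω ^ 2) / (γ * ((S + 1 : ℕ) : ℝ)) * (1 + ∑ t ∈ Finset.Icc 1 (S + 1), δ t)
        ≤ 50 * Γ * Ω ^ 2 / (γ * ((S + 1 : ℕ) : ℝ)) +
          (18 * Γ * Ω ^ 2 / (γ * ((S + 1 : ℕ) : ℝ))) * ∑ t ∈ Finset.Icc 1 (S + 1), δ t := by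
      have h8 : (0:ℝ) ≤ (Γ * Ω ^ 2 / (γ * ((S + 1 : ℕ) : ℝ))) * ∑ t ∈ Finset.Icc 1 (S + 1), δ t :=
        mul_nonneg hA.le hδsum0
      have h9 : (2 * Γ * Ω ^ 2) / (γ * ((S + 1 : ℕ) : ℝ))
          = 2 * (Γ * Ω ^ 2 / (γ * ((S + 1 : ℕ) : ℝ))) := by ring
      have h10 : 50 * Γ * Ω ^ 2 / (γ * ((S + 1 : ℕ) : ℝ))
          = 50 * (Γ * Ω ^ 2 / (γ * ((S + 1 : ℕ) : ℝ))) := by ring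
      have h11 : 18 * Γ * Ω ^ 2 / (γ * ((S + 1 : ℕ) : ℝ))
          = 18 * (Γ * Ω ^ 2 / (γ * ((S + 1 : ℕ) : ℝ))) := by ring
      rw [h9, h10, h11]
      nlinarith [hA, h8, hδsum0]
    linarith
  -- conclude via sSup and sInf
  rw [sub_le_iff_le_add]
  apply csSup_le (hYne.image _)
  rintro b ⟨y', hy', rfl⟩
  have h2 : f (xpart zavg) y' -
      (50 * Γ * Ω ^ 2 / (γ * ((S + 1 : ℕ) : ℝ)) +
        (18 * Γ * Ω ^ 2 / (γ * ((S + 1 : ℕ) : ℝ))) * ∑ t ∈ Finset.Icc 1 (S + 1), δ t)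
      ≤ sInf ((fun x' => f x' (ypart zavg)) '' X) := by
    apply le_csInf (hXne.image _)
    rintro b ⟨x', hx', rfl⟩
    have h3 := key x' hx' y' hy'
    linarith
  linarith
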